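/- Let G be a graph and let v_1, v_2 be vertices of G such that for some radius r the balls of radius r around v_1 and v_2 induce trees that are non-isomorphic as rooted trees (rooted at v_1 and v_2 respectively). Then color refinement assigns different stable colors to v_1 and v_2. -/

import Mathlib

/-!
Equal stable colours survive refinement, and on a finite graph the refinement stabilises, so two
vertices of equal stable colour admit a colour-preserving bijection between their neighbourhoods;
composing with a transposition, it can be made to send a given neighbour to any neighbour of the
same colour. In a ball `B_r(v)` inducing a tree, rooted at `v` with depth the distance from `v`,
a vertex of depth `d < r` keeps all its neighbours in `G`: its parent and its children. So if `x`
and `y` have equal stable colour and depth and so do their parents, the bijection matching the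
parents restricts to a colour-preserving bijection between the children of `x` and of `y`.
Assembling these bijections from the roots down gives an isomorphism of the two rooted trees.
-/

open SimpleGraph Filter MeasureTheory

/-- Round-`i` color-refinement colour equality across two graphs: `crStep G H i u v`
says that vertex `u` of `G` and vertex `v` of `H` receive the same colour `C_i`. -/
def crStep {A : Type*} {B : Type*} (G : SimpleGraph A) (H : SimpleGraph B) :
    ℕ → A → B → Prop
  | 0, _, _ => True
  | i + 1, u, v =>
      crStep G H i u v ∧
        ∃ e : G.neighborSet u ≃ H.neighborSet v,
          ∀ x : G.neighborSet u, crStep G H i (x : A) ((e x : H.neighborSet v) : B)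

/-- CR-equivalence of two graphs: equal multisets of stable colours, i.e. a colour-preserving
bijection between the vertex sets (colours computed by the joint run of colour refinement). -/
def CREquiv {A B : Type*} (G : SimpleGraph A) (H : SimpleGraph B) : Prop :=
  ∃ φ : A ≃ B, ∀ (v : A) (i : ℕ), crStep G H i v (φ v)

/-- A graph is CR-identifiable if every CR-equivalent graph is isomorphic to it. -/
def CRIdentifiable {A : Type*} (G : SimpleGraph A) : Prop :=
  ∀ (B : Type) (H : SimpleGraph B), CREquiv G H → Nonempty (G ≃g H)

/-- A covering map: a surjective homomorphism restricting to a bijection on each neighbourhood. -/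
def GraphCoveringMap {A B : Type*} (K : SimpleGraph A) (G : SimpleGraph B) (f : A → B) : Prop :=
  Function.Surjective f ∧ (∀ ⦃u v : A⦄, K.Adj u v → G.Adj (f u) (f v)) ∧
    ∀ u : A, Set.BijOn f (K.neighborSet u) (G.neighborSet (f u))

/-- A set of vertices each having at least two neighbours inside the set. -/
def IsTwoCoreSet {V : Type*} (G : SimpleGraph V) (S : Set V) : Prop :=
  ∀ v ∈ S, ∃ a b, a ≠ b ∧ a ∈ S ∧ b ∈ S ∧ G.Adj v a ∧ G.Adj v b

/-- The 2-core: the maximal vertex set inducing a subgraph of minimum degree at least 2. -/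
def twoCore {V : Type*} (G : SimpleGraph V) : Set V :=
  ⋃₀ {S : Set V | IsTwoCoreSet G S}

/-- Vertices reachable from `x` by a walk avoiding the 2-core except at `x`:
the vertex set of the rooted tree `T_x` hanging at a core vertex `x`. -/
def treeSet {V : Type*} (G : SimpleGraph V) (x : V) : Set V :=
  {y | ∃ w : G.Walk x y, ∀ z ∈ w.support, z = x ∨ z ∉ twoCore G}

lemma mem_treeSet_self {V : Type*} (G : SimpleGraph V) (x : V) : x ∈ treeSet G x :=
  ⟨SimpleGraph.Walk.nil, by
    intro z hz
    simp only [SimpleGraph.Walk.support_nil, List.mem_singleton] at hz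
    exact Or.inl hz⟩

/-- The trees hanging at `x` (in `G`) and at `y` (in `H`) are isomorphic as rooted trees. -/
def RootedTreeIso {V W : Type*} (G : SimpleGraph V) (x : V) (H : SimpleGraph W) (y : W) : Prop :=
  ∃ φ : (G.induce (treeSet G x)) ≃g (H.induce (treeSet H y)),
    φ ⟨x, mem_treeSet_self G x⟩ = ⟨y, mem_treeSet_self H y⟩

/-- For a unicyclic graph, the 2-core is its unique cycle; `cLen` is the cycle length. -/
noncomputable def cLen {V : Type*} (G : SimpleGraph V) : ℕ := (twoCore G).ncard

/-- A finite connected graph with exactly one cycle. -/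
def Unicyclic {V : Type*} (G : SimpleGraph V) : Prop :=
  G.Connected ∧ Nat.card G.edgeSet = Nat.card V

/-- An enumeration of the unique cycle of a unicyclic graph, as a `cLen G`-periodic
sequence running once around the cycle. -/
def IsCycleEnum {V : Type*} (G : SimpleGraph V) (e : ℕ → V) : Prop :=
  0 < cLen G ∧ (∀ i, e (i + cLen G) = e i) ∧
    (∀ i j, i < cLen G → j < cLen G → e i = e j → i = j) ∧
    Set.range e = twoCore G ∧ ∀ i, G.Adj (e i) (e (i + 1))

/-- `q` is the length of a period of the circular word `R(G)` of rooted-tree types. -/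
def HasPeriod {V : Type*} (G : SimpleGraph V) (q : ℕ) : Prop :=
  0 < q ∧ q ∣ cLen G ∧ ∃ e, IsCycleEnum G e ∧ ∀ i, RootedTreeIso G (e (i + q)) G (e i)

/-- The minimal periodicity `p(G)` of the circular word `R(G)`. -/
noncomputable def periodicity {V : Type*} (G : SimpleGraph V) : ℕ :=
  sInf {q | HasPeriod G q}

/-- The circular words `R(G)` and `R(H)` have a common period of length `q`. -/
def CommonPeriod {V W : Type*} (G : SimpleGraph V) (H : SimpleGraph W) (q : ℕ) : Prop :=
  0 < q ∧ q ∣ cLen G ∧ q ∣ cLen H ∧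
    ∃ eG eH, IsCycleEnum G eG ∧ IsCycleEnum H eH ∧
      (∀ i, RootedTreeIso G (eG (i + q)) G (eG i)) ∧
      (∀ i, RootedTreeIso H (eH (i + q)) H (eH i)) ∧
      ∀ i, RootedTreeIso G (eG i) H (eH i)

/-- The universal covers of `G` and `H` are isomorphic, expressed as the existence of a
single tree covering both graphs. -/
def CommonUniversalCover {V W : Type*} (G : SimpleGraph V) (H : SimpleGraph W) : Prop :=
  ∃ (T : Type) (U : SimpleGraph T) (f : T → V) (g : T → W),
    U.IsTree ∧ GraphCoveringMap U G f ∧ GraphCoveringMap U H g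

/-- The vertex set of the complex part of `G`: vertices whose connected component has more
edges than vertices. -/
def complexSet {V : Type*} (G : SimpleGraph V) : Set V :=
  {v | (G.connectedComponentMk v).supp.ncard <
        Nat.card (G.induce (G.connectedComponentMk v).supp).edgeSet}

/-- The ball of radius `r` around `v` in `G`. -/
def gball {V : Type*} (G : SimpleGraph V) (v : V) (r : ℕ) : Set V :=
  {u | ∃ w : G.Walk v u, w.length ≤ r}

lemma mem_gball_self {V : Type*} (G : SimpleGraph V) (v : V) (r : ℕ) : v ∈ gball G v r :=
  ⟨SimpleGraph.Walk.nil, by simp⟩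

/-- `hR` says that `R` is difunctional; `e` is composed with the transposition of `e p` and `q`. -/
theorem exists_equiv_apply_eq_of_forall_rel {α β : Type*} {R : α → β → Prop}
    (hR : ∀ {x x' y y'}, R x y → R x' y → R x' y' → R x y') (e : α ≃ β) (he : ∀ x, R x (e x))
    {p : α} {q : β} (hpq : R p q) : ∃ e' : α ≃ β, e' p = q ∧ ∀ x, R x (e' x) := by
  classical
  refine ⟨e.trans (Equiv.swap (e p) q), by simp, fun x => ?_⟩
  rw [Equiv.trans_apply]
  rcases eq_or_ne x p with rfl | hxp
  · simpa using hpq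
  rcases eq_or_ne (e x) q with hxq | hxq
  · rw [hxq, Equiv.swap_apply_right]
    exact hR (hxq ▸ he x) hpq (he p)
  · rw [Equiv.swap_apply_of_ne_of_ne (e.injective.ne hxp) hxq]
    exact he x

section ColorRefinement

variable {A B C : Type*} {G : SimpleGraph A} {H : SimpleGraph B} {K : SimpleGraph C}

theorem crStep_of_le {i j : ℕ} (hij : i ≤ j) {u : A} {v : B} (h : crStep G H j u v) :
    crStep G H i u v := by
  induction hij with
  | refl => exact h
  | step _ ih => exact ih h.1

theorem crStep_symm : ∀ {i : ℕ} {u : A} {v : B}, crStep G H i u v → crStep H G i v u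
  | 0, _, _, _ => trivial
  | _ + 1, _, _, ⟨h, e, he⟩ =>
    ⟨crStep_symm h, e.symm, fun y => by simpa using crStep_symm (he (e.symm y))⟩

theorem crStep_trans : ∀ {i : ℕ} {u : A} {v : B} {w : C},
    crStep G H i u v → crStep H K i v w → crStep G K i u w
  | 0, _, _, _, _, _ => trivial
  | _ + 1, _, _, _, ⟨h, e, he⟩, ⟨h', e', he'⟩ =>
    ⟨crStep_trans h h', e.trans e', fun x => crStep_trans (he x) (he' (e x))⟩

theorem antitone_crStep : Antitone fun i => crStep G H i :=
  fun _ _ hij _ _ => crStep_of_le hij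

def SameStableColor (G : SimpleGraph A) (u v : A) : Prop := ∀ i, crStep G G i u v

theorem SameStableColor.symm {u v : A} (h : SameStableColor G u v) : SameStableColor G v u :=
  fun i => crStep_symm (h i)

theorem SameStableColor.trans {u v w : A} (h : SameStableColor G u v)
    (h' : SameStableColor G v w) : SameStableColor G u w :=
  fun i => crStep_trans (h i) (h' i)

theorem exists_sameStableColor_iff_crStep [Finite A] :
    ∃ N, ∀ u v : A, SameStableColor G u v ↔ crStep G G N u v := by
  obtain ⟨N, hN⟩ := WellFoundedLT.antitone_chain_condition (antitone_crStep (G := G) (H := G))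
  refine ⟨N, fun u v => ⟨fun h => h N, fun h i => ?_⟩⟩
  rcases le_total i N with hi | hi
  · exact crStep_of_le hi h
  · rwa [← hN i hi]

theorem SameStableColor.exists_neighborSet_equiv [Finite A] {u v : A}
    (h : SameStableColor G u v) :
    ∃ e : G.neighborSet u ≃ G.neighborSet v,
      ∀ x : G.neighborSet u, SameStableColor G x (e x) := by
  obtain ⟨N, hN⟩ := exists_sameStableColor_iff_crStep (G := G)
  obtain ⟨-, e, he⟩ := h (N + 1)
  exact ⟨e, fun x => (hN _ _).2 (he x)⟩

end ColorRefinement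

namespace SimpleGraph

section RootedTree

variable {α β : Type*}

/-- `c` is a child of `x` in `T` rooted at `a`. -/
def IsChild (T : SimpleGraph α) (a x c : α) : Prop :=
  T.Adj x c ∧ T.dist a c = T.dist a x + 1

variable {T : SimpleGraph α} {a x c : α}

theorem not_isChild_root : ¬ T.IsChild a x a := fun h => by
  simpa using h.2

theorem IsChild.not_isChild_swap (h : T.IsChild a x c) : ¬ T.IsChild a c x :=
  fun h' => by have := h.2; have := h'.2; omega

theorem Connected.exists_isChild (hT : T.Connected) (hc : c ≠ a) : ∃ p, T.IsChild a p c := by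
  obtain ⟨w, hw⟩ := hT.exists_walk_length_eq_dist a c
  obtain ⟨p, hadj, q, hq⟩ := Walk.not_nil_iff.mp (w.reverse.not_nil_of_ne hc)
  have hlen : w.length = q.length + 1 := by
    rw [← Walk.length_reverse, hq, Walk.length_cons]
  have hle : T.dist a p ≤ q.length := dist_comm ▸ dist_le q
  refine ⟨p, hadj.symm, ?_⟩
  rcases hadj.symm.diff_dist_adj (u := a) with h | h | h <;> omega

theorem Connected.induction_on_isChild (hT : T.Connected) {P : α → Prop} (root : P a)
    (step : ∀ p c, T.IsChild a p c → P p → P c) (x : α) : P x := by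
  induction hd : T.dist a x using Nat.strong_induction_on generalizing x with
  | _ d ih =>
    rcases eq_or_ne x a with rfl | hx
    · exact root
    obtain ⟨p, hp⟩ := hT.exists_isChild hx
    exact step p x hp (ih _ (by rw [← hd, hp.2]; omega) p rfl)

theorem dist_le_of_mem_support {u v z : α} (w : T.Walk u v) (hz : z ∈ w.support) :
    T.dist u z ≤ w.length := by
  classical exact (dist_le _).trans (w.length_takeUntil_le_length hz)

/-- The parent is the penultimate vertex of the path from the root. -/
theorem IsTree.isChild_unique (hT : T.IsTree) {p p' : α} (h : T.IsChild a p c)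
    (h' : T.IsChild a p' c) : p = p' := by
  obtain ⟨P, hP, -⟩ := hT.connected.exists_path_of_dist a c
  suffices ∀ p, T.IsChild a p c → p = P.penultimate from (this p h).trans (this p' h').symm
  intro p hp
  obtain ⟨Q, hQ, hQlen⟩ := hT.connected.exists_path_of_dist a p
  have hc : c ∉ Q.support := fun hc => by
    have := dist_le_of_mem_support Q hc
    have := hp.2
    omega
  exact hT.isAcyclic.eq_penultimate_of_adj_end hP hp.1.symm
    (hT.isAcyclic.mem_support_of_ne_mem_support_of_adj_of_isPath hP hQ hp.1.symm hc)

theorem IsTree.adj_iff_isChild (hT : T.IsTree) {x y : α} :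
    T.Adj x y ↔ T.IsChild a x y ∨ T.IsChild a y x := by
  refine ⟨fun h => ?_, fun h => h.elim (·.1) (·.1.symm)⟩
  rcases hT.dist_eq_dist_add_one_of_adj a h with h' | h'
  · exact Or.inr ⟨h.symm, h'⟩
  · exact Or.inl ⟨h, h'⟩

open scoped Classical in
/-- Defined from the root down: a child `c` of `x` goes to `τ x y c`, where `y` is the image of
`x`. -/
noncomputable def childwiseMap (T : SimpleGraph α) (a : α) (b : β)
    (τ : ∀ x : α, β → {c // T.IsChild a x c} → β) (x : α) : β :=
  if h : ∃ p, T.IsChild a p x then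
    τ h.choose (childwiseMap T a b τ h.choose) ⟨x, h.choose_spec⟩
  else b
termination_by T.dist a x
decreasing_by have := h.choose_spec.2; omega

variable {b : β} {τ : ∀ x : α, β → {c // T.IsChild a x c} → β}

theorem childwiseMap_root : childwiseMap T a b τ a = b := by
  rw [childwiseMap, dif_neg fun ⟨_, h⟩ => not_isChild_root h]

theorem IsTree.childwiseMap_of_isChild (hT : T.IsTree) (h : T.IsChild a x c) :
    childwiseMap T a b τ c = τ x (childwiseMap T a b τ x) ⟨c, h⟩ := by
  have hex : ∃ p, T.IsChild a p c := ⟨x, h⟩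
  rw [childwiseMap, dif_pos hex]
  obtain rfl : hex.choose = x := hT.isChild_unique hex.choose_spec h
  rfl

structure BijOnChildren (T₁ : SimpleGraph α) (a : α) (T₂ : SimpleGraph β) (b : β) (f : α → β) :
    Prop where
  map_root : f a = b
  bijOn : ∀ x, Set.BijOn f {c | T₁.IsChild a x c} {c | T₂.IsChild b (f x) c}

namespace BijOnChildren

variable {T₁ : SimpleGraph α} {T₂ : SimpleGraph β} {f : α → β}

theorem isChild_map (hf : BijOnChildren T₁ a T₂ b f) (h : T₁.IsChild a x c) :
    T₂.IsChild b (f x) (f c) :=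
  (hf.bijOn x).mapsTo h

theorem map_ne_root (hf : BijOnChildren T₁ a T₂ b f) (h₁ : T₁.Connected) (hc : c ≠ a) :
    f c ≠ b := fun h => by
  obtain ⟨p, hp⟩ := h₁.exists_isChild hc
  exact not_isChild_root (h ▸ hf.isChild_map hp)

theorem injective (hf : BijOnChildren T₁ a T₂ b f) (h₁ : T₁.Connected) (h₂ : T₂.IsTree) :
    Function.Injective f := by
  intro x
  refine h₁.induction_on_isChild (a := a) (P := fun x => ∀ x', f x = f x' → x = x') ?_ ?_ x
  · intro x' h
    by_contra hx'
    exact hf.map_ne_root h₁ (Ne.symm hx') (h.symm.trans hf.map_root)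
  · intro p c hpc ih x' h
    have hx' : x' ≠ a := by
      rintro rfl
      exact hf.map_ne_root h₁ (fun hc => not_isChild_root (hc ▸ hpc)) (h.trans hf.map_root)
    obtain ⟨p', hp'⟩ := h₁.exists_isChild hx'
    obtain rfl : p = p' := ih p' (h₂.isChild_unique (hf.isChild_map hpc) (h ▸ hf.isChild_map hp'))
    exact (hf.bijOn p).injOn hpc hp' h

theorem surjective (hf : BijOnChildren T₁ a T₂ b f) (h₂ : T₂.Connected) :
    Function.Surjective f := by
  refine h₂.induction_on_isChild ⟨a, hf.map_root⟩ ?_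
  rintro q y hqy ⟨x, rfl⟩
  obtain ⟨c, -, rfl⟩ := (hf.bijOn x).surjOn hqy
  exact ⟨c, rfl⟩

theorem isChild_map_iff (hf : BijOnChildren T₁ a T₂ b f) (h₁ : T₁.IsTree) (h₂ : T₂.IsTree) :
    T₂.IsChild b (f x) (f c) ↔ T₁.IsChild a x c := by
  refine ⟨fun h => ?_, hf.isChild_map⟩
  have hc : c ≠ a := by
    rintro rfl
    exact not_isChild_root (hf.map_root ▸ h)
  obtain ⟨p, hp⟩ := h₁.connected.exists_isChild hc
  obtain rfl : p = x :=
    hf.injective h₁.connected h₂ (h₂.isChild_unique (hf.isChild_map hp) h)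
  exact hp

theorem exists_iso (hf : BijOnChildren T₁ a T₂ b f) (h₁ : T₁.IsTree) (h₂ : T₂.IsTree) :
    ∃ φ : T₁ ≃g T₂, φ a = b := by
  refine ⟨⟨Equiv.ofBijective f ⟨hf.injective h₁.connected h₂, hf.surjective h₂.connected⟩,
    fun {x y} => ?_⟩, hf.map_root⟩
  change T₂.Adj (f x) (f y) ↔ T₁.Adj x y
  rw [h₁.adj_iff_isChild, h₂.adj_iff_isChild, hf.isChild_map_iff h₁ h₂,
    hf.isChild_map_iff h₁ h₂]

end BijOnChildren

variable {T₁ : SimpleGraph α} {T₂ : SimpleGraph β}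

theorem IsTree.exists_bijOnChildren (h₁ : T₁.IsTree) (S : α → β → Prop) (hab : S a b)
    (hS : ∀ x y, S x y →
      ∃ e : {c // T₁.IsChild a x c} ≃ {c // T₂.IsChild b y c},
        ∀ c : {c // T₁.IsChild a x c}, S c (e c)) :
    ∃ f, BijOnChildren T₁ a T₂ b f := by
  classical
  choose e he using hS
  set τ : ∀ x, β → {c // T₁.IsChild a x c} → β :=
    fun x y c => if h : S x y then (e x y h c : β) else b
  set f := childwiseMap T₁ a b τ
  have hroot : f a = b := childwiseMap_root
  have hτ : ∀ x c (hc : T₁.IsChild a x c), f c = τ x (f x) ⟨c, hc⟩ :=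
    fun _ _ => h₁.childwiseMap_of_isChild
  have hτS : ∀ x y (h : S x y) c, τ x y c = e x y h c := fun _ _ h _ => dif_pos h
  have hfS : ∀ x, S x (f x) := by
    refine h₁.connected.induction_on_isChild (hroot ▸ hab) fun p c hpc ih => ?_
    rw [hτ p c hpc, hτS _ _ ih]
    exact he _ _ ih ⟨c, hpc⟩
  have hf : ∀ x c (hc : T₁.IsChild a x c), f c = e x (f x) (hfS x) ⟨c, hc⟩ := fun x c hc => by
    rw [hτ x c hc, hτS _ _ (hfS x)]
  refine ⟨f, hroot, fun x => ⟨fun c hc => ?_, fun c hc c' hc' h => ?_, fun y hy => ?_⟩⟩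
  · rw [Set.mem_ofPred_eq, hf x c hc]
    exact (e x (f x) (hfS x) ⟨c, hc⟩).2
  · rw [hf x c hc, hf x c' hc'] at h
    exact congrArg Subtype.val ((e x (f x) (hfS x)).injective (Subtype.ext h))
  · refine ⟨_, ((e x (f x) (hfS x)).symm ⟨y, hy⟩).2, ?_⟩
    rw [hf x _ ((e x (f x) (hfS x)).symm ⟨y, hy⟩).2, Subtype.coe_eta, Equiv.apply_symm_apply]

theorem IsTree.isChild_iff_of_neighborSet_equiv (h₁ : T₁.IsTree) (h₂ : T₂.IsTree) {x : α} {y : β}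
    (hxy : T₁.dist a x = T₂.dist b y) (e : T₁.neighborSet x ≃ T₂.neighborSet y)
    (he : ∀ p : T₁.neighborSet x, T₁.IsChild a p x → T₂.IsChild b (e p) y)
    (c : T₁.neighborSet x) : T₁.IsChild a x c ↔ T₂.IsChild b y (e c) := by
  refine ⟨fun hc => ?_, fun hc => ?_⟩
  · refine (h₂.adj_iff_isChild.mp (e c).2).resolve_right fun hy => ?_
    have hx : x ≠ a := by
      rintro rfl
      have := hy.2
      simp only [dist_self] at hxy
      omega
    obtain ⟨p, hp⟩ := h₁.connected.exists_isChild hx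
    have : (⟨p, hp.1.symm⟩ : T₁.neighborSet x) = c :=
      e.injective (Subtype.ext (h₂.isChild_unique (he ⟨p, hp.1.symm⟩ hp) hy))
    exact hc.not_isChild_swap (this ▸ hp)
  · exact (h₁.adj_iff_isChild.mp c.2).resolve_right fun hx => (he c hx).not_isChild_swap hc

theorem IsTree.exists_isChild_equiv_of_neighborSet_equiv (h₁ : T₁.IsTree) (h₂ : T₂.IsTree)
    {x : α} {y : β} (hxy : T₁.dist a x = T₂.dist b y) (e : T₁.neighborSet x ≃ T₂.neighborSet y)
    (he : ∀ p : T₁.neighborSet x, T₁.IsChild a p x → T₂.IsChild b (e p) y) :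
    ∃ e' : {c // T₁.IsChild a x c} ≃ {c // T₂.IsChild b y c},
      ∀ c, (e' c : β) = e ⟨c, c.2.1⟩ :=
  ⟨(Equiv.subtypeSubtypeEquivSubtype fun h => h.1).symm.trans
    ((e.subtypeEquiv (h₁.isChild_iff_of_neighborSet_equiv h₂ hxy e he)).trans
      (Equiv.subtypeSubtypeEquivSubtype fun h => h.1)), fun _ => rfl⟩

end RootedTree

section Ball

variable {V : Type*}

abbrev ballGraph (G : SimpleGraph V) (v : V) (r : ℕ) : SimpleGraph (gball G v r) :=
  G.induce (gball G v r)

abbrev ballCenter (G : SimpleGraph V) (v : V) (r : ℕ) : gball G v r :=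
  ⟨v, mem_gball_self G v r⟩

variable {G : SimpleGraph V} {v : V} {r : ℕ}

theorem dist_ballCenter_le (x : gball G v r) :
    (G.ballGraph v r).dist (G.ballCenter v r) x ≤ r := by
  classical
  obtain ⟨w, hw⟩ := x.2
  have hsupp : ∀ z ∈ w.support, z ∈ gball G v r := fun z hz =>
    ⟨w.takeUntil z hz, (w.length_takeUntil_le_length hz).trans hw⟩
  calc _ ≤ (w.induce _ hsupp).length := dist_le _
    _ = w.length := by rw [← Walk.length_map, Walk.map_induce]; rfl
    _ ≤ r := hw

theorem mem_gball_of_dist_lt (hT : (G.ballGraph v r).Preconnected) {x : gball G v r}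
    (hx : (G.ballGraph v r).dist (G.ballCenter v r) x < r) {z : V}
    (hz : G.Adj x z) : z ∈ gball G v r := by
  obtain ⟨w, hw⟩ := (hT (G.ballCenter v r) x).exists_walk_length_eq_dist
  obtain ⟨w', hw'⟩ : ∃ w' : G.Walk v x, w'.length = w.length :=
    ⟨w.map (Embedding.induce _).toHom, w.length_map _⟩
  refine ⟨w'.concat hz, ?_⟩
  rw [Walk.length_concat]
  omega

def neighborSetEquivOfDistLt (hT : (G.ballGraph v r).Preconnected) {x : gball G v r}
    (hx : (G.ballGraph v r).dist (G.ballCenter v r) x < r) :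
    (G.ballGraph v r).neighborSet x ≃ G.neighborSet x where
  toFun c := ⟨c.1, c.2⟩
  invFun z := ⟨⟨z, mem_gball_of_dist_lt hT hx z.2⟩, z.2⟩
  left_inv _ := rfl
  right_inv _ := rfl

/-- The invariant carried down the two balls: equal stable colour and depth, and parents of
equal stable colour. -/
def BallMatched (G : SimpleGraph V) (r : ℕ) {v₁ v₂ : V} (x : gball G v₁ r) (y : gball G v₂ r) :
    Prop :=
  SameStableColor G x y ∧
    (G.ballGraph v₁ r).dist (G.ballCenter v₁ r) x = (G.ballGraph v₂ r).dist (G.ballCenter v₂ r) y ∧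
    ∀ p q, (G.ballGraph v₁ r).IsChild (G.ballCenter v₁ r) p x →
      (G.ballGraph v₂ r).IsChild (G.ballCenter v₂ r) q y → SameStableColor G p q

variable [Finite V] {v₁ v₂ : V} {x : gball G v₁ r} {y : gball G v₂ r}

theorem BallMatched.exists_neighborSet_equiv (hm : BallMatched G r x y)
    (h₁ : (G.ballGraph v₁ r).IsTree) (h₂ : (G.ballGraph v₂ r).IsTree)
    (hdr : (G.ballGraph v₁ r).dist (G.ballCenter v₁ r) x < r) :
    ∃ e : (G.ballGraph v₁ r).neighborSet x ≃ (G.ballGraph v₂ r).neighborSet y,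
      (∀ c, SameStableColor G c.1 (e c).1) ∧
      ∀ p : (G.ballGraph v₁ r).neighborSet x,
        (G.ballGraph v₁ r).IsChild (G.ballCenter v₁ r) p x →
        (G.ballGraph v₂ r).IsChild (G.ballCenter v₂ r) (e p) y := by
  obtain ⟨hxy, hd, hpar⟩ := hm
  obtain ⟨eG, heG⟩ := hxy.exists_neighborSet_equiv
  set e₀ := (neighborSetEquivOfDistLt h₁.connected.preconnected hdr).trans
    (eG.trans (neighborSetEquivOfDistLt h₂.connected.preconnected (hd.symm.trans_lt hdr)).symm)
  have he₀ : ∀ c, SameStableColor G c.1 (e₀ c).1 := fun c => heG ⟨c.1.1, c.2⟩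
  by_cases hx : x = G.ballCenter v₁ r
  · subst hx
    exact ⟨e₀, he₀, fun p hp => (not_isChild_root hp).elim⟩
  obtain ⟨p₀, hp₀⟩ := h₁.connected.exists_isChild hx
  have hy : y ≠ G.ballCenter v₂ r := by
    rintro rfl
    rw [dist_self, h₁.connected.dist_eq_zero_iff] at hd
    exact hx hd.symm
  obtain ⟨q₀, hq₀⟩ := h₂.connected.exists_isChild hy
  obtain ⟨e, hep, he⟩ := exists_equiv_apply_eq_of_forall_rel
    (R := fun c c' => SameStableColor G c.1 c'.1)
    (fun h h' h'' => by exact (h.trans h'.symm).trans h'') e₀ he₀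
    (p := ⟨p₀, hp₀.1.symm⟩) (q := ⟨q₀, hq₀.1.symm⟩) (hpar p₀ q₀ hp₀ hq₀)
  refine ⟨e, he, fun p hp => ?_⟩
  obtain rfl : p = ⟨p₀, hp₀.1.symm⟩ := Subtype.ext (h₁.isChild_unique hp hp₀)
  rwa [hep]

theorem BallMatched.exists_isChild_equiv (hm : BallMatched G r x y)
    (h₁ : (G.ballGraph v₁ r).IsTree) (h₂ : (G.ballGraph v₂ r).IsTree) :
    ∃ e : {c // (G.ballGraph v₁ r).IsChild (G.ballCenter v₁ r) x c} ≃
      {c // (G.ballGraph v₂ r).IsChild (G.ballCenter v₂ r) y c},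
      ∀ c, BallMatched G r c.1 (e c).1 := by
  suffices ∃ e : {c // (G.ballGraph v₁ r).IsChild (G.ballCenter v₁ r) x c} ≃
      {c // (G.ballGraph v₂ r).IsChild (G.ballCenter v₂ r) y c},
      ∀ c, SameStableColor G c.1 (e c).1 by
    obtain ⟨e, he⟩ := this
    refine ⟨e, fun c => ⟨he c, by rw [c.2.2, (e c).2.2, hm.2.1], fun p q hp hq => ?_⟩⟩
    obtain rfl := h₁.isChild_unique hp c.2
    obtain rfl := h₂.isChild_unique hq (e c).2
    exact hm.1
  rcases lt_or_ge ((G.ballGraph v₁ r).dist (G.ballCenter v₁ r) x) r with hdr | hdr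
  · obtain ⟨e, he, hpar⟩ := hm.exists_neighborSet_equiv h₁ h₂ hdr
    obtain ⟨e', he'⟩ := h₁.exists_isChild_equiv_of_neighborSet_equiv h₂ hm.2.1 e hpar
    exact ⟨e', fun c => by rw [he' c]; exact he ⟨c.1, c.2.1⟩⟩
  · have : IsEmpty {c // (G.ballGraph v₁ r).IsChild (G.ballCenter v₁ r) x c} :=
      ⟨fun c => by have := c.2.2; have := dist_ballCenter_le c.1; omega⟩
    have : IsEmpty {c // (G.ballGraph v₂ r).IsChild (G.ballCenter v₂ r) y c} :=
      ⟨fun c => by have := c.2.2; have := hm.2.1; have := dist_ballCenter_le c.1; omega⟩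
    exact ⟨Equiv.equivOfIsEmpty _ _, isEmptyElim⟩

theorem exists_rootedIso_of_sameStableColor (h₁ : (G.ballGraph v₁ r).IsTree)
    (h₂ : (G.ballGraph v₂ r).IsTree) (h : SameStableColor G v₁ v₂) :
    ∃ φ : G.ballGraph v₁ r ≃g G.ballGraph v₂ r, φ (G.ballCenter v₁ r) = G.ballCenter v₂ r := by
  obtain ⟨f, hf⟩ := h₁.exists_bijOnChildren (BallMatched G r)
    ⟨h, by simp only [dist_self], fun _ _ hp => (not_isChild_root hp).elim⟩
    fun _ _ hm => hm.exists_isChild_equiv h₁ h₂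
  exact hf.exists_iso h₁ h₂

end Ball

end SimpleGraph

/-- If the balls of radius `r` around `v₁` and `v₂` induce trees that are non-isomorphic as
rooted trees, then colour refinement assigns `v₁` and `v₂` different stable colours. -/
theorem distinct_local_trees_distinguished {V : Type} [Fintype V] (G : SimpleGraph V)
    (v₁ v₂ : V) (r : ℕ)
    (h1 : (G.induce (gball G v₁ r)).IsTree) (h2 : (G.induce (gball G v₂ r)).IsTree)
    (hni : ¬ ∃ φ : (G.induce (gball G v₁ r)) ≃g (G.induce (gball G v₂ r)),
        φ ⟨v₁, mem_gball_self G v₁ r⟩ = ⟨v₂, mem_gball_self G v₂ r⟩) :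
    ¬ ∀ i : ℕ, crStep G G i v₁ v₂ :=
  fun h => hni (exists_rootedIso_of_sameStableColor h1 h2 h)
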